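/- Let n ≥ 1, A ∈ ℂ^{n×n}, and r ≥ 0 a real number. Suppose there exists a unit vector x₀ ∈ ℂⁿ with ‖A x₀‖ > r (strict feasibility), and suppose every z ∈ W_{≥r}(A) satisfies Re z > 0. Let A_h := (A + A*)/2 and A_s := (A − A*)/(2i). Then the set S := { g ∈ ℝ : there exists τ ≥ 0 such that g·A_h − A_s + τ·(A*A − r²·I) ⪯ 0 } is nonempty, and sup S = inf{ Im z / Re z : z ∈ W_{≥r}(A) }; moreover this supremum is attained (the infimum itself belongs to S). Equivalently, tan ψ̲_r(A) is the optimal value of the semidefinite program maximizing g subject to g·A_h − A_s + τ·(A*A − r²·I) ⪯ 0, τ ≥ 0. -/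

import Mathlib

open scoped ComplexOrder Matrix

noncomputable section

/-- The vertically projected Davis–Wielandt shell `W_{≥r}(A)`. -/
def wShell {n : ℕ} (A : Matrix (Fin n) (Fin n) ℂ) (r : ℝ) : Set ℂ :=
  { z | ∃ x : EuclideanSpace ℂ (Fin n), ‖x‖ = 1 ∧ r ≤ ‖Matrix.toEuclideanLin A x‖ ∧
      z = (inner ℂ x (Matrix.toEuclideanLin A x) : ℂ) }

/-!
If `g·A_h − A_s + τ(A*A − r²) ⪯ 0` with `τ ≥ 0`, then at a unit `x` with `‖Ax‖ ≥ r` the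
constraint term is nonnegative, so `g Re⟪x, Ax⟫ ≤ Im⟪x, Ax⟫`: every feasible `g` is at most
`g₀ = inf T`, which is finite because the shell is compact. Conversely, by homogeneity
`g₀ Re⟪x, Ax⟫ − Im⟪x, Ax⟫ ≤ 0` wherever `‖Ax‖² > r²‖x‖²`, and the S-lemma, with strict
feasibility at `x₀`, supplies the multiplier `τ` that puts `g₀` in the SDP feasible set.

Over `ℂ` the S-lemma needs no rank condition: the cone `{⟪x, Lx⟫}` is convex
(Toeplitz–Hausdorff), so it can be separated from the open first quadrant by a line through `0`.
-/

open scoped InnerProductSpace ComplexConjugate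
open Complex

lemma Complex.exists_norm_eq_one_conj_mul_add_mul_eq_ofReal_mul (α β : ℂ) {d : ℂ} (hd : d ≠ 0) :
    ∃ u : ℂ, ‖u‖ = 1 ∧ ∃ μ : ℝ, conj u * α + u * β = μ * d := by
  set w := conj d * β - d * conj α
  -- `u` turns `w` into a positive real, and this makes `conj d * (conj u * α + u * β)` real
  set u := exp (-arg w * I)
  have huw : u * w = ‖w‖ := by
    conv_lhs => rw [← norm_mul_exp_arg_mul_I w]
    rw [mul_left_comm, ← Complex.exp_add]; simp
  set z := conj d * (conj u * α + u * β)
  have hz : conj z = z := by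
    have : z - conj z = u * w - conj (u * w) := by
      simp only [z, w, map_mul, map_add, map_sub, conj_conj]; ring
    rwa [huw, conj_ofReal, sub_self, sub_eq_zero, eq_comm] at this
  refine ⟨u, by simpa [u] using norm_exp_ofReal_mul_I (-arg w), z.re / normSq d, ?_⟩
  rw [conj_eq_iff_re] at hz
  rw [ofReal_div, hz, normSq_eq_conj_mul_self, div_mul_eq_mul_div,
    eq_div_iff (mul_ne_zero ((map_ne_zero _).mpr hd) hd)]
  ring

section NumericalRangeCone

variable {E : Type*} [NormedAddCommGroup E] [InnerProductSpace ℂ E] (L : E →ₗ[ℂ] E)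

lemma inner_smul_map_smul_self (c : ℂ) (x : E) :
    ⟪c • x, L (c • x)⟫_ℂ = (‖c‖ ^ 2 : ℝ) * ⟪x, L x⟫_ℂ := by
  rw [map_smul, inner_smul_left, inner_smul_right, ← mul_assoc, Complex.conj_mul']
  push_cast; rfl

lemma inner_map_self_ofReal_smul_add (a b : ℝ) (x y : E) :
    ⟪(a : ℂ) • x + (b : ℂ) • y, L ((a : ℂ) • x + (b : ℂ) • y)⟫_ℂ
      = a ^ 2 * ⟪x, L x⟫_ℂ + b ^ 2 * ⟪y, L y⟫_ℂ + a * b * (⟪x, L y⟫_ℂ + ⟪y, L x⟫_ℂ) := by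
  simp only [map_add, map_smul, inner_add_left, inner_add_right, inner_smul_left,
    inner_smul_right, conj_ofReal]
  ring

lemma nonneg_smul_mem_range_inner_map_self {c : ℝ} (hc : 0 ≤ c) {z : ℂ}
    (hz : z ∈ Set.range fun x => ⟪x, L x⟫_ℂ) : c • z ∈ Set.range fun x => ⟪x, L x⟫_ℂ := by
  obtain ⟨x, rfl⟩ := hz
  refine ⟨(√c : ℂ) • x, ?_⟩
  dsimp only
  rw [inner_smul_map_smul_self, norm_real, Real.norm_of_nonneg (Real.sqrt_nonneg c),
    Real.sq_sqrt hc, real_smul]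

/-- After rotating `x` by a phase, `⟪v, L v⟫` along the segment from `x` to `y` is a real
combination of `⟪x, L x⟫` and `⟪y, L y⟫` whose coefficients move from `(1, 0)` to `(0, 1)`;
where they are equal it is a positive multiple of the sum. -/
lemma exists_pos_mul_add_mem_range_inner_map_self (x y : E)
    (hne : ⟪x, L x⟫_ℂ ≠ ⟪y, L y⟫_ℂ) :
    ∃ c : ℝ, 0 < c ∧ c * (⟪x, L x⟫_ℂ + ⟪y, L y⟫_ℂ) ∈ Set.range fun x => ⟪x, L x⟫_ℂ := by
  set p := ⟪x, L x⟫_ℂ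
  set q := ⟪y, L y⟫_ℂ
  obtain ⟨u, hu, μ, hμ⟩ := Complex.exists_norm_eq_one_conj_mul_add_mul_eq_ofReal_mul
    ⟪x, L y⟫_ℂ ⟪y, L x⟫_ℂ (sub_ne_zero.mpr hne)
  have hpath (s : ℝ) : ⟪((1 - s : ℝ) : ℂ) • u • x + (s : ℂ) • y,
      L (((1 - s : ℝ) : ℂ) • u • x + (s : ℂ) • y)⟫_ℂ
      = ((1 - s) ^ 2 + s * (1 - s) * μ : ℝ) * p + (s ^ 2 - s * (1 - s) * μ : ℝ) * q := by
    rw [inner_map_self_ofReal_smul_add, inner_smul_map_smul_self, hu, map_smul,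
      inner_smul_left, inner_smul_right, hμ]
    push_cast
    ring
  obtain ⟨s, -, hs⟩ : ∃ s ∈ Set.Icc (0 : ℝ) 1,
      (1 - s) ^ 2 + s * (1 - s) * μ - (s ^ 2 - s * (1 - s) * μ) = 0 :=
    intermediate_value_Icc' zero_le_one (by fun_prop) (by norm_num)
  refine ⟨(1 - s) ^ 2 + s * (1 - s) * μ, by nlinarith [sq_nonneg s, sq_nonneg (1 - s)], _,
    (hpath s).trans ?_⟩
  rw [sub_eq_zero.mp hs]
  ring

lemma add_mem_range_inner_map_self {p q : ℂ} (hp : p ∈ Set.range fun x => ⟪x, L x⟫_ℂ)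
    (hq : q ∈ Set.range fun x => ⟪x, L x⟫_ℂ) : p + q ∈ Set.range fun x => ⟪x, L x⟫_ℂ := by
  obtain ⟨x, rfl⟩ := hp
  obtain ⟨y, rfl⟩ := hq
  dsimp only
  by_cases hne : ⟪x, L x⟫_ℂ = ⟪y, L y⟫_ℂ
  · rw [hne, ← two_smul ℝ]
    exact nonneg_smul_mem_range_inner_map_self L zero_le_two ⟨y, rfl⟩
  · obtain ⟨c, hc, hmem⟩ := exists_pos_mul_add_mem_range_inner_map_self L x y hne
    have := nonneg_smul_mem_range_inner_map_self L (inv_nonneg.mpr hc.le) hmem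
    rwa [real_smul, ← mul_assoc, ← ofReal_mul, inv_mul_cancel₀ hc.ne', ofReal_one, one_mul]
      at this

/-- That this set is a convex cone is the Toeplitz–Hausdorff theorem. -/
def numericalRangeCone : ConvexCone ℝ ℂ where
  carrier := Set.range fun x => ⟪x, L x⟫_ℂ
  smul_mem' _ hc _ hz := nonneg_smul_mem_range_inner_map_self L hc.le hz
  add_mem' _ hp _ hq := add_mem_range_inner_map_self L hp hq

end NumericalRangeCone

/-- The S-lemma in the plane, by separating `K` from the open first quadrant. -/
theorem ConvexCone.exists_nonneg_forall_re_add_mul_im_nonpos (K : ConvexCone ℝ ℂ)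
    (h0 : (0 : ℂ) ∈ K) (hK : ∀ z ∈ K, 0 < z.im → z.re ≤ 0) {z₀ : ℂ} (hz₀ : z₀ ∈ K)
    (him : 0 < z₀.im) : ∃ τ : ℝ, 0 ≤ τ ∧ ∀ z ∈ K, z.re + τ * z.im ≤ 0 := by
  set O : Set ℂ := Set.Ioi 0 ×ℂ Set.Ioi 0
  have hdisj : Disjoint O K :=
    Set.disjoint_left.mpr fun z hzO hzK => (hK z hzK hzO.2).not_gt hzO.1
  obtain ⟨f, u, hfO, hfK⟩ := geometric_hahn_banach_open
    ((convex_halfSpace_re_gt 0).inter (convex_halfSpace_im_gt 0))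
    (isOpen_Ioi.reProdIm isOpen_Ioi) K.convex hdisj
  have hu : u ≤ 0 := by simpa using hfK 0 h0
  have hf_closure : ∀ z ∈ closure O, f z ≤ 0 := fun z hz =>
    closure_minimal (fun w hw => (hfO w hw).le.trans hu)
      (isClosed_le f.continuous continuous_const) hz
  rw [closure_reProdIm, closure_Ioi] at hf_closure
  have hf1 : f 1 ≤ 0 := hf_closure 1 (mem_reProdIm.mpr ⟨by simp, by simp⟩)
  have hfI : f I ≤ 0 := hf_closure I (mem_reProdIm.mpr ⟨by simp, by simp⟩)
  have hf1I : f 1 + f I < 0 := by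
    simpa using (hfO (1 + I) (by simp)).trans_le hu
  -- otherwise a large multiple of a point of `K` would lie below `u`
  have hfK' : ∀ z ∈ K, 0 ≤ f z := by
    intro z hz
    by_contra! hneg
    have hc : 0 < u / f z + 1 := by
      have := div_nonneg_of_nonpos hu hneg.le; linarith
    have := hfK _ (K.smul_mem hc hz)
    rw [map_smul, smul_eq_mul, add_mul, div_mul_cancel₀ _ hneg.ne, one_mul] at this
    linarith
  have hf (z : ℂ) : f z = z.re * f 1 + z.im * f I := by
    have hz : z = z.re • (1 : ℂ) + z.im • I := by simp [real_smul, re_add_im]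
    rw [hz, map_add, map_smul, map_smul, smul_eq_mul, smul_eq_mul]
    simp
  have hf1' : f 1 < 0 := by
    refine hf1.lt_of_ne fun h => ?_
    have := hfK' z₀ hz₀
    rw [hf, h] at this
    nlinarith
  refine ⟨f I / f 1, div_nonneg_of_nonpos hfI hf1'.le, fun z hz => ?_⟩
  have := hfK' z hz
  rw [hf, ← div_mul_cancel₀ (f I) hf1'.ne] at this
  exact nonpos_of_mul_nonneg_left (this.trans_eq (by ring)) hf1'

/-- The S-lemma for two Hermitian forms: the joint range of `(p, q)` is the convex cone
`numericalRangeCone (P + I • Q)`. -/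
theorem exists_nonneg_forall_add_mul_nonpos_of_inner_map_self {E : Type*}
    [NormedAddCommGroup E] [InnerProductSpace ℂ E] (P Q : E →ₗ[ℂ] E) {p q : E → ℝ}
    (hP : ∀ x, ⟪x, P x⟫_ℂ = p x) (hQ : ∀ x, ⟪x, Q x⟫_ℂ = q x)
    (hpq : ∀ x, 0 < q x → p x ≤ 0) {x₀ : E} (hx₀ : 0 < q x₀) :
    ∃ τ : ℝ, 0 ≤ τ ∧ ∀ x, p x + τ * q x ≤ 0 := by
  have hPQ (x : E) : ⟪x, (P + I • Q) x⟫_ℂ = ⟨p x, q x⟩ := by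
    rw [LinearMap.add_apply, LinearMap.smul_apply, inner_add_right, inner_smul_right, hP, hQ]
    apply Complex.ext <;> simp
  obtain ⟨τ, hτ, h⟩ := (numericalRangeCone (P + I • Q)).exists_nonneg_forall_re_add_mul_im_nonpos
    ⟨0, by simp⟩ (by rintro _ ⟨x, rfl⟩; simp only [hPQ]; exact hpq x) ⟨x₀, rfl⟩
    (by simp only [hPQ]; exact hx₀)
  refine ⟨τ, hτ, fun x => ?_⟩
  simpa only [hPQ] using h _ ⟨x, rfl⟩

namespace Matrix

variable {ι : Type*} [Fintype ι] [DecidableEq ι] (A : Matrix ι ι ℂ)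

lemma inner_toEuclideanLin_conjTranspose_self (x : EuclideanSpace ℂ ι) :
    ⟪x, toEuclideanLin Aᴴ x⟫_ℂ = conj ⟪x, toEuclideanLin A x⟫_ℂ := by
  rw [toEuclideanLin_conjTranspose_eq_adjoint, LinearMap.adjoint_inner_right, inner_conj_symm]

lemma inner_toEuclideanLin_half_add_conjTranspose_self (x : EuclideanSpace ℂ ι) :
    ⟪x, toEuclideanLin ((2 : ℂ)⁻¹ • (A + Aᴴ)) x⟫_ℂ = (⟪x, toEuclideanLin A x⟫_ℂ).re := by
  rw [map_smul, map_add, LinearMap.smul_apply, LinearMap.add_apply, inner_smul_right,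
    inner_add_right, inner_toEuclideanLin_conjTranspose_self, add_conj]
  push_cast
  ring

lemma inner_toEuclideanLin_half_sub_conjTranspose_self (x : EuclideanSpace ℂ ι) :
    ⟪x, toEuclideanLin ((2 * I)⁻¹ • (A - Aᴴ)) x⟫_ℂ = (⟪x, toEuclideanLin A x⟫_ℂ).im := by
  rw [map_smul, map_sub, LinearMap.smul_apply, LinearMap.sub_apply, inner_smul_right,
    inner_sub_right, inner_toEuclideanLin_conjTranspose_self, sub_conj]
  push_cast
  field_simp

lemma inner_toEuclideanLin_conjTranspose_mul_self_sub (r : ℝ) (x : EuclideanSpace ℂ ι) :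
    ⟪x, toEuclideanLin (Aᴴ * A - (r : ℂ) ^ 2 • 1) x⟫_ℂ
      = (‖toEuclideanLin A x‖ ^ 2 - r ^ 2 * ‖x‖ ^ 2 : ℝ) := by
  rw [map_sub, map_smul, toLpLin_mul_same, toLpLin_one, LinearMap.sub_apply, LinearMap.smul_apply,
    LinearMap.comp_apply, LinearMap.id_apply, inner_sub_right, inner_smul_right,
    toEuclideanLin_conjTranspose_eq_adjoint, LinearMap.adjoint_inner_right,
    inner_self_eq_norm_sq_to_K, inner_self_eq_norm_sq_to_K]
  push_cast
  rfl

variable {A} in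
lemma posSemidef_neg_iff_of_inner {f : EuclideanSpace ℂ ι → ℝ}
    (hf : ∀ x, ⟪x, toEuclideanLin A x⟫_ℂ = f x) : (-A).PosSemidef ↔ ∀ x, f x ≤ 0 := by
  have hneg (x : EuclideanSpace ℂ ι) : ⟪toEuclideanLin (-A) x, x⟫_ℂ = (-f x : ℝ) := by
    rw [map_neg, LinearMap.neg_apply, inner_neg_left, ← inner_conj_symm, hf, conj_ofReal,
      ofReal_neg]
  rw [← isPositive_toEuclideanLin_iff, LinearMap.isPositive_iff_complex]
  simp only [hneg, RCLike.re_to_complex, ofReal_re, Left.nonneg_neg_iff, true_and]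

lemma inner_toEuclideanLin_smul_half_add_sub_half_sub (g : ℝ) (x : EuclideanSpace ℂ ι) :
    ⟪x, toEuclideanLin ((g : ℂ) • ((2 : ℂ)⁻¹ • (A + Aᴴ)) - (2 * I)⁻¹ • (A - Aᴴ)) x⟫_ℂ
      = (g * (⟪x, toEuclideanLin A x⟫_ℂ).re - (⟪x, toEuclideanLin A x⟫_ℂ).im : ℝ) := by
  rw [map_sub, map_smul, LinearMap.sub_apply, LinearMap.smul_apply, inner_sub_right,
    inner_smul_right, inner_toEuclideanLin_half_add_conjTranspose_self,
    inner_toEuclideanLin_half_sub_conjTranspose_self]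
  push_cast
  rfl

lemma posSemidef_neg_smul_half_add_sub_half_sub_add_smul_iff (r g τ : ℝ) :
    (-((g : ℂ) • ((2 : ℂ)⁻¹ • (A + Aᴴ)) - (2 * I)⁻¹ • (A - Aᴴ)
      + (τ : ℂ) • (Aᴴ * A - (r : ℂ) ^ 2 • 1))).PosSemidef ↔
    ∀ x, g * (⟪x, toEuclideanLin A x⟫_ℂ).re - (⟪x, toEuclideanLin A x⟫_ℂ).im
      + τ * (‖toEuclideanLin A x‖ ^ 2 - r ^ 2 * ‖x‖ ^ 2) ≤ 0 := by
  refine posSemidef_neg_iff_of_inner fun x => ?_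
  rw [map_add, LinearMap.add_apply, inner_add_right,
    inner_toEuclideanLin_smul_half_add_sub_half_sub, map_smul, LinearMap.smul_apply,
    inner_smul_right, inner_toEuclideanLin_conjTranspose_mul_self_sub]
  push_cast
  rfl

end Matrix

section Shell

open Matrix

variable {n : ℕ} (A : Matrix (Fin n) (Fin n) ℂ) (r : ℝ)

lemma isCompact_wShell : IsCompact (wShell A r) := by
  have hL : Continuous (toEuclideanLin A) := LinearMap.continuous_of_finiteDimensional _
  have : wShell A r = (fun x => ⟪x, toEuclideanLin A x⟫_ℂ) ''
      (Metric.sphere 0 1 ∩ {x | r ≤ ‖toEuclideanLin A x‖}) := by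
    ext z
    simp [wShell, eq_comm, and_assoc]
  rw [this]
  exact ((isCompact_sphere 0 1).inter_right (isClosed_le continuous_const hL.norm)).image
    (continuous_id.inner hL)

lemma inv_norm_sq_mul_inner_mem_wShell {x : EuclideanSpace ℂ (Fin n)} (hx : x ≠ 0)
    (hAx : r * ‖x‖ ≤ ‖toEuclideanLin A x‖) :
    ((‖x‖⁻¹ ^ 2 : ℝ) : ℂ) * ⟪x, toEuclideanLin A x⟫_ℂ ∈ wShell A r := by
  refine ⟨(‖x‖⁻¹ : ℂ) • x, norm_smul_inv_norm hx, ?_, ?_⟩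
  · rw [map_smul, norm_smul, norm_inv, norm_real, norm_norm,
      le_inv_mul_iff₀ (norm_pos_iff.mpr hx), mul_comm]
    exact hAx
  · rw [inner_smul_map_smul_self]
    simp

variable {A r}

lemma le_im_div_re_of_mem_wShell (hr : 0 ≤ r) (hre : ∀ z ∈ wShell A r, 0 < z.re)
    {g τ : ℝ} (hτ : 0 ≤ τ)
    (h : ∀ x, g * (⟪x, toEuclideanLin A x⟫_ℂ).re - (⟪x, toEuclideanLin A x⟫_ℂ).im
      + τ * (‖toEuclideanLin A x‖ ^ 2 - r ^ 2 * ‖x‖ ^ 2) ≤ 0)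
    {z : ℂ} (hz : z ∈ wShell A r) : g ≤ z.im / z.re := by
  obtain ⟨x, hx, hAx, rfl⟩ := hz
  have hc : 0 ≤ ‖toEuclideanLin A x‖ ^ 2 - r ^ 2 * ‖x‖ ^ 2 := by
    rw [hx, one_pow, mul_one, sub_nonneg]
    exact pow_le_pow_left₀ hr hAx 2
  rw [le_div_iff₀ (hre _ ⟨x, hx, hAx, rfl⟩)]
  nlinarith [h x, mul_nonneg hτ hc]

lemma mul_re_sub_im_nonpos_of_forall_le_im_div_re (hre : ∀ z ∈ wShell A r, 0 < z.re) {g : ℝ}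
    (hg : ∀ z ∈ wShell A r, g ≤ z.im / z.re) {x : EuclideanSpace ℂ (Fin n)}
    (hx : 0 < ‖toEuclideanLin A x‖ ^ 2 - r ^ 2 * ‖x‖ ^ 2) :
    g * (⟪x, toEuclideanLin A x⟫_ℂ).re - (⟪x, toEuclideanLin A x⟫_ℂ).im ≤ 0 := by
  have hx0 : x ≠ 0 := by
    rintro rfl
    simp at hx
  have hAx : r * ‖x‖ ≤ ‖toEuclideanLin A x‖ :=
    le_of_sq_le_sq (by linarith) (norm_nonneg _)
  have hmem := inv_norm_sq_mul_inner_mem_wShell A r hx0 hAx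
  have hpos : 0 < ‖x‖⁻¹ ^ 2 := by positivity
  have hre' := hre _ hmem
  have hg' := hg _ hmem
  simp only [re_ofReal_mul, im_ofReal_mul] at hre' hg'
  rw [mul_div_mul_left _ _ hpos.ne', le_div_iff₀ (pos_of_mul_pos_right hre' hpos.le)] at hg'
  linarith

end Shell

theorem lower_constrained_phase_sdp_general {n : ℕ}
    (A : Matrix (Fin n) (Fin n) ℂ) (r : ℝ) (hr : 0 ≤ r)
    (x₀ : EuclideanSpace ℂ (Fin n)) (hx₀ : ‖x₀‖ = 1)
    (hfeas : r < ‖Matrix.toEuclideanLin A x₀‖)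
    (hre : ∀ z ∈ wShell A r, 0 < z.re) :
    let Ah : Matrix (Fin n) (Fin n) ℂ := ((2 : ℂ))⁻¹ • (A + Aᴴ)
    let As : Matrix (Fin n) (Fin n) ℂ := ((2 * Complex.I))⁻¹ • (A - Aᴴ)
    let S : Set ℝ := { g | ∃ τ : ℝ, 0 ≤ τ ∧
      (-((g : ℂ) • Ah - As + (τ : ℂ) • (Aᴴ * A - ((r : ℂ) ^ 2) • 1))).PosSemidef }
    let T : Set ℝ := { t | ∃ z ∈ wShell A r, t = z.im / z.re }
    S.Nonempty ∧ sInf T ∈ S ∧ sSup S = sInf T := by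
  intro Ah As S T
  have hS (g : ℝ) := exists_congr fun τ => and_congr_right fun (_ : 0 ≤ τ) =>
    Matrix.posSemidef_neg_smul_half_add_sub_half_sub_add_smul_iff A r g τ
  have hT : T = (fun z => z.im / z.re) '' wShell A r := by
    ext
    simp [T, eq_comm]
  have hTne : T.Nonempty := ⟨_, _, ⟨x₀, hx₀, hfeas.le, rfl⟩, rfl⟩
  have hTbdd : BddBelow T := hT ▸ ((isCompact_wShell A r).image_of_continuousOn
    (continuous_im.continuousOn.div continuous_re.continuousOn fun z hz => (hre z hz).ne')).bddBelow
  have hlb (g : ℝ) (hg : g ∈ S) : g ≤ sInf T := by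
    obtain ⟨τ, hτ, h⟩ := (hS g).mp hg
    exact le_csInf hTne fun _ ⟨z, hz, ht⟩ => ht ▸ le_im_div_re_of_mem_wShell hr hre hτ h hz
  have hmem : sInf T ∈ S := (hS _).mpr <| exists_nonneg_forall_add_mul_nonpos_of_inner_map_self _ _
    (Matrix.inner_toEuclideanLin_smul_half_add_sub_half_sub A (sInf T))
    (Matrix.inner_toEuclideanLin_conjTranspose_mul_self_sub A r)
    (fun x hx => mul_re_sub_im_nonpos_of_forall_le_im_div_re hre
      (fun z hz => csInf_le hTbdd ⟨z, hz, rfl⟩) hx)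
    (x₀ := x₀) (by rw [hx₀]; nlinarith)
  exact ⟨⟨_, hmem⟩, hmem, IsGreatest.csSup_eq ⟨hmem, hlb⟩⟩

/-- Lower-phase half of the paper's Proposition 3: `tan ψ̲_r(A)` equals the optimal value
of the SDP maximizing `g` subject to `g·A_h − A_s + τ·(A*A − r²·I) ⪯ 0`, `τ ≥ 0`. -/
theorem lower_constrained_phase_sdp {n : ℕ} (hn : 1 ≤ n)
    (A : Matrix (Fin n) (Fin n) ℂ) (r : ℝ) (hr : 0 ≤ r)
    (x₀ : EuclideanSpace ℂ (Fin n)) (hx₀ : ‖x₀‖ = 1)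
    (hfeas : r < ‖Matrix.toEuclideanLin A x₀‖)
    (hre : ∀ z ∈ wShell A r, 0 < z.re) :
    let Ah : Matrix (Fin n) (Fin n) ℂ := ((2 : ℂ))⁻¹ • (A + Aᴴ)
    let As : Matrix (Fin n) (Fin n) ℂ := ((2 * Complex.I))⁻¹ • (A - Aᴴ)
    let S : Set ℝ := { g | ∃ τ : ℝ, 0 ≤ τ ∧
      (-((g : ℂ) • Ah - As + (τ : ℂ) • (Aᴴ * A - ((r : ℂ) ^ 2) • 1))).PosSemidef }
    let T : Set ℝ := { t | ∃ z ∈ wShell A r, t = z.im / z.re }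
    S.Nonempty ∧ sInf T ∈ S ∧ sSup S = sInf T :=
  lower_constrained_phase_sdp_general A r hr x₀ hx₀ hfeas hre
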